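/- arXiv:2503.07729 — 5 statements merged into one kernel-verified Lean document; each statement's English description precedes it below -/
import Mathlib

section
/- Let ι be a nonempty finite index set and let μ, a : ι → ℝ satisfy μ k > 0 and 0 ≤ a k ≤ μ k for every k ∈ ι. Write μ_P := Σ_k μ k and μ_A := Σ_k a k, and assume μ_A > 0. If Σ_k (a k)² / (μ k · μ_A) = μ_A / μ_P, then a k / μ k = μ_A / μ_P for every k ∈ ι. -/
/-- **A single initial distribution determines classical eigenstate thermalization.**
`ι` indexes the ergodic cells `P_k` of a finite decomposition of a classical phase space,
`μ k = μ(P_k) > 0` and `a k = μ(A ∩ P_k)` with `0 ≤ a k ≤ μ k`, and the region `A` has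
positive measure `μ_A = Σ_k a k > 0`.  If the observable `1_A` thermalizes on average in the
single initial distribution `ρ_A = 1_A / μ_A`, i.e.
`Σ_k (a k)² / (μ k · μ_A) = μ_A / μ_P`, then classical eigenstate thermalization holds:
`a k / μ k = μ_A / μ_P` for every cell `k`. -/
theorem single_distribution_determines_classical_eigenstate_thermalization
    {ι : Type*} [Fintype ι] [Nonempty ι]
    (μ a : ι → ℝ)
    (hμ : ∀ k, 0 < μ k) (ha0 : ∀ k, 0 ≤ a k) (ha1 : ∀ k, a k ≤ μ k)
    (hA : 0 < ∑ j, a j)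
    (h : (∑ k, (a k) ^ 2 / (μ k * (∑ j, a j))) = (∑ j, a j) / (∑ j, μ j)) :
    ∀ k, a k / μ k = (∑ j, a j) / (∑ j, μ j) := by
  set S := ∑ j, a j with hS
  set T := ∑ j, μ j with hT
  have hTpos : 0 < T := Finset.sum_pos (fun k _ => hμ k) Finset.univ_nonempty
  -- Σ a²/μ = S²/T
  have h2 : (∑ k, (a k) ^ 2 / μ k) = S ^ 2 / T := by
    have : (∑ k, (a k) ^ 2 / (μ k * S)) = (∑ k, (a k) ^ 2 / μ k) / S := by
      rw [Finset.sum_div]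
      congr 1; ext k; rw [div_div]
    rw [this] at h
    field_simp at h ⊢
    linarith [h]
  -- variance is zero
  have hvar : (∑ k, μ k * (a k / μ k - S / T) ^ 2) = 0 := by
    have expand : ∀ k, μ k * (a k / μ k - S / T) ^ 2
        = (a k) ^ 2 / μ k - 2 * (S / T) * a k + (S / T) ^ 2 * μ k := by
      intro k
      have hk := (hμ k).ne'
      field_simp
      ring
    rw [Finset.sum_congr rfl (fun k _ => expand k)]
    rw [Finset.sum_add_distrib, Finset.sum_sub_distrib, ← Finset.mul_sum, ← Finset.mul_sum,
      h2, ← hS, ← hT]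
    field_simp
    ring
  intro k
  have hterm : μ k * (a k / μ k - S / T) ^ 2 = 0 := by
    have hnn : ∀ j ∈ Finset.univ, 0 ≤ μ j * (a j / μ j - S / T) ^ 2 :=
      fun j _ => mul_nonneg (hμ j).le (sq_nonneg _)
    exact (Finset.sum_eq_zero_iff_of_nonneg hnn).mp hvar k (Finset.mem_univ k)
  have := (mul_eq_zero.mp hterm).resolve_left (hμ k).ne'
  have := pow_eq_zero_iff (n := 2) (by norm_num) |>.mp this
  linarith [this]
end

section
/- Let ρ be a state and Π_A an observable on ℂ^D. Then as T → ∞ the time average (1/(2T)) · ∫_{−T}^{T} Tr(ρ(t) Π_A) dt converges, and its limit equals Σ_{(n,m) : E n = E m} ⟨e n, ρ (e m)⟩ · ⟨e m, Π_A (e n)⟩, the sum ranging over all pairs n, m ∈ Fin D with equal eigenvalues E n = E m (including n = m). -/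
open MeasureTheory Filter
open scoped ComplexOrder

namespace QET

variable {D : ℕ}

/-- `exp(-itH)` for the Hamiltonian `H = Σ_n (E n) • P_n`, where `P_n` is the orthogonal
projection onto the `n`-th vector of the fixed orthonormal eigenbasis `e`.  All operators are
written as matrices in this eigenbasis, so `H` is diagonal and
`exp(-itH) = diag (exp (-i t E n))`. -/
noncomputable def U (E : Fin D → ℝ) (t : ℝ) : Matrix (Fin D) (Fin D) ℂ :=
  Matrix.diagonal fun n => Complex.exp (-(Complex.I) * t * (E n))

/-- Time evolution `X(t) = exp(-itH) · X · exp(itH)`. -/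
noncomputable def evolve (E : Fin D → ℝ) (t : ℝ) (X : Matrix (Fin D) (Fin D) ℂ) :
    Matrix (Fin D) (Fin D) ℂ :=
  U E t * X * U E (-t)

/-- A state: a positive semidefinite operator with unit trace. -/
def IsState (ρ : Matrix (Fin D) (Fin D) ℂ) : Prop :=
  ρ.PosSemidef ∧ ρ.trace = 1

/-- An observable: an orthogonal projection (Hermitian idempotent). -/
def IsObservable (P : Matrix (Fin D) (Fin D) ℂ) : Prop :=
  P.IsHermitian ∧ P * P = P

/-- Orthogonal projection `Π_S` onto the energy shell spanned by `{e n : n ∈ S}`. -/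
noncomputable def shellProj (S : Finset (Fin D)) : Matrix (Fin D) (Fin D) ℂ :=
  Matrix.diagonal fun n => if n ∈ S then 1 else 0

/-- A state is supported on the shell of `S`: `Π_S ρ Π_S = ρ`. -/
def SupportedOn (S : Finset (Fin D)) (ρ : Matrix (Fin D) (Fin D) ℂ) : Prop :=
  shellProj S * ρ * shellProj S = ρ

/-- Thermal value `⟨P⟩_S = Tr(P Π_S)/d` (a real number: trace of Hermitian products below). -/
noncomputable def thermVal (S : Finset (Fin D)) (P : Matrix (Fin D) (Fin D) ℂ) : ℝ :=
  (P * shellProj S).trace.re / S.card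

/-- Fourier transform `w̃(E) = ∫ w(t) exp(-iEt) dt` of a weight function. -/
noncomputable def fourier (w : ℝ → ℝ) (En : ℝ) : ℂ :=
  ∫ t : ℝ, (w t : ℂ) * Complex.exp (-(Complex.I) * En * t)

/-- A weight function: integrable, nonnegative, normalized to `∫ w = 1`. -/
structure IsWeight (w : ℝ → ℝ) : Prop where
  integrable : Integrable w
  nonneg : ∀ t, 0 ≤ w t
  normalized : (∫ t : ℝ, w t) = 1

/-- A completely positive weight: a weight function whose Fourier transform is a
nonnegative real number everywhere. -/
structure IsCPWeight (w : ℝ → ℝ) extends IsWeight w : Prop where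
  fourier_im : ∀ En : ℝ, (fourier w En).im = 0
  fourier_nonneg : ∀ En : ℝ, 0 ≤ (fourier w En).re

/-- The matrix element `⟨e n, (P - ⟨P⟩_S · 1) e m⟩ = ⟨e n, P e m⟩ - ⟨P⟩_S δ_{nm}`. -/
noncomputable def devEl (S : Finset (Fin D)) (P : Matrix (Fin D) (Fin D) ℂ)
    (n m : Fin D) : ℂ :=
  P n m - if n = m then (thermVal S P : ℂ) else 0

/-- Band variance `Σ_{n,m ∈ S, |E n - E m| < ΔE} |⟨e n, P e m⟩ - ⟨P⟩_S δ_{nm}|²`. -/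
noncomputable def bandVar (S : Finset (Fin D)) (E : Fin D → ℝ) (ΔE : ℝ)
    (P : Matrix (Fin D) (Fin D) ℂ) : ℝ :=
  ∑ n ∈ S, ∑ m ∈ S,
    if |E n - E m| < ΔE then ‖devEl S P n m‖ ^ 2 else 0

/-- Energy-band thermalization in the shell `S` with bandwidth `ΔE` and accuracy `ε`. -/
def EnergyBandTherm (S : Finset (Fin D)) (E : Fin D → ℝ) (ΔE ε : ℝ)
    (P : Matrix (Fin D) (Fin D) ℂ) : Prop :=
  (1 / (S.card : ℝ)) * bandVar S E ΔE P < ε ^ 2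

/-- Expectation value `⟨v, P v⟩` of an operator in a vector. -/
noncomputable def expVal (P : Matrix (Fin D) (Fin D) ℂ) (v : Fin D → ℂ) : ℂ :=
  dotProduct (star v) (P.mulVec v)

/-! In the eigenbasis of `H` the matrix element `ρ(t) n m` is `exp(-i(E n - E m)t) ρ n m`, so
`Tr(ρ(t) Π_A)` is a finite combination of oscillating exponentials. The time average of
`exp(-iωt)` is bounded by `1/(|ω|T)` for `ω ≠ 0` and equals `1` for `ω = 0`, so in the limit only
the pairs with `E n = E m` survive. -/

noncomputable def timeAverage (f : ℝ → ℂ) (T : ℝ) : ℂ :=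
  (1 / (2 * T) : ℝ) • ∫ t in (-T)..T, f t

theorem timeAverage_finsetSum {ι : Type*} (s : Finset ι) {f : ι → ℝ → ℂ}
    (T : ℝ) (hf : ∀ i ∈ s, IntervalIntegrable (f i) volume (-T) T) :
    timeAverage (fun t => ∑ i ∈ s, f i t) T = ∑ i ∈ s, timeAverage (f i) T := by
  rw [timeAverage, intervalIntegral.integral_finsetSum hf, Finset.smul_sum]
  rfl

theorem timeAverage_mul_const (f : ℝ → ℂ) (c : ℂ) (T : ℝ) :
    timeAverage (fun t => f t * c) T = timeAverage f T * c := by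
  simp only [timeAverage, intervalIntegral.integral_mul_const, smul_mul_assoc]

theorem tendsto_timeAverage_const (c : ℂ) : Tendsto (timeAverage fun _ => c) atTop (nhds c) := by
  refine tendsto_const_nhds.congr' ?_
  filter_upwards [eventually_gt_atTop 0] with T hT
  rw [timeAverage, intervalIntegral.integral_const, smul_smul, sub_neg_eq_add,
    show 1 / (2 * T) * (T + T) = 1 by field_simp; ring, one_smul]

theorem norm_integral_exp_neg_I_mul_le {ω : ℝ} (hω : ω ≠ 0) (a b : ℝ) :
    ‖∫ t in a..b, Complex.exp (-Complex.I * ω * t)‖ ≤ 2 / |ω| := by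
  have hc : -Complex.I * ω ≠ 0 := by simp [hω]
  have hexp : ∀ t : ℝ, ‖Complex.exp (-Complex.I * ω * t)‖ = 1 := fun t => by
    rw [Complex.norm_exp]; simp
  rw [integral_exp_mul_complex hc, norm_div]
  gcongr
  · calc _ ≤ _ := norm_sub_le _ _
      _ = 2 := by rw [hexp, hexp]; norm_num
  · simp

theorem tendsto_timeAverage_exp_of_ne_zero {ω : ℝ} (hω : ω ≠ 0) :
    Tendsto (timeAverage fun t => Complex.exp (-Complex.I * ω * t)) atTop (nhds 0) := by
  have hbound : ∀ᶠ T in atTop,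
      ‖timeAverage (fun t => Complex.exp (-Complex.I * ω * t)) T‖ ≤ T⁻¹ * |ω|⁻¹ := by
    filter_upwards [eventually_gt_atTop 0] with T hT
    rw [timeAverage, norm_smul, Real.norm_of_nonneg (by positivity)]
    calc _ ≤ 1 / (2 * T) * (2 / |ω|) := by gcongr; exact norm_integral_exp_neg_I_mul_le hω _ _
      _ = T⁻¹ * |ω|⁻¹ := by field_simp
  refine squeeze_zero_norm' hbound ?_
  simpa using tendsto_inv_atTop_zero.mul_const |ω|⁻¹

theorem tendsto_timeAverage_exp (ω : ℝ) :
    Tendsto (timeAverage fun t => Complex.exp (-Complex.I * ω * t)) atTop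
      (nhds (if ω = 0 then 1 else 0)) := by
  split_ifs with hω
  · simpa [hω] using tendsto_timeAverage_const 1
  · exact tendsto_timeAverage_exp_of_ne_zero hω

theorem evolve_apply (E : Fin D → ℝ) (t : ℝ) (X : Matrix (Fin D) (Fin D) ℂ) (n m : Fin D) :
    evolve E t X n m = Complex.exp (-Complex.I * (E n - E m : ℝ) * t) * X n m := by
  simp only [evolve, U, Matrix.mul_diagonal, Matrix.diagonal_mul]
  rw [mul_right_comm, ← Complex.exp_add]
  push_cast
  ring_nf

theorem trace_evolve_mul (E : Fin D → ℝ) (t : ℝ) (X Y : Matrix (Fin D) (Fin D) ℂ) :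
    (evolve E t X * Y).trace =
      ∑ n, ∑ m, Complex.exp (-Complex.I * (E n - E m : ℝ) * t) * (X n m * Y m n) := by
  simp only [Matrix.trace, Matrix.diag, Matrix.mul_apply, evolve_apply, mul_assoc]

theorem infinite_time_average_eq_degenerate_sum_general
    {D : ℕ} (E : Fin D → ℝ)
    (ρ PiA : Matrix (Fin D) (Fin D) ℂ) :
    Filter.Tendsto
      (fun T : ℝ => (1 / (2 * T) : ℝ) • ∫ t in (-T)..T, (evolve E t ρ * PiA).trace)
      Filter.atTop
      (nhds (∑ n : Fin D, ∑ m : Fin D, if E n = E m then ρ n m * PiA m n else 0)) := by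
  have hcont : ∀ n m : Fin D, Continuous fun t : ℝ =>
      Complex.exp (-Complex.I * (E n - E m : ℝ) * t) * (ρ n m * PiA m n) := by
    intro n m; fun_prop
  have hexpand : timeAverage (fun t => (evolve E t ρ * PiA).trace) = fun T => ∑ n, ∑ m,
      timeAverage (fun t => Complex.exp (-Complex.I * (E n - E m : ℝ) * t)) T *
        (ρ n m * PiA m n) := by
    funext T
    simp_rw [trace_evolve_mul]
    rw [timeAverage_finsetSum _ _ fun n _ =>
      (continuous_finsetSum _ fun m _ => hcont n m).intervalIntegrable _ _]
    refine Finset.sum_congr rfl fun n _ => ?_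
    rw [timeAverage_finsetSum _ _ fun m _ => (hcont n m).intervalIntegrable _ _]
    simp only [timeAverage_mul_const]
  change Tendsto (timeAverage fun t => (evolve E t ρ * PiA).trace) atTop _
  rw [hexpand]
  refine tendsto_finsetSum _ fun n _ => tendsto_finsetSum _ fun m _ => ?_
  simpa [sub_eq_zero] using (tendsto_timeAverage_exp (E n - E m)).mul_const (ρ n m * PiA m n)

/-- **The infinite-time average of `Tr(ρ(t) Π_A)` converges and equals the degenerate sum.**
For a state `ρ` and an observable `Π_A` on `ℂ^D`, as `T → ∞` the time average
`(1/(2T)) ∫_{-T}^{T} Tr(ρ(t) Π_A) dt` converges to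
`Σ_{(n,m) : E n = E m} ⟨e n, ρ (e m)⟩ · ⟨e m, Π_A (e n)⟩`
(the sum over all pairs with equal eigenvalues, including `n = m`). -/
theorem infinite_time_average_eq_degenerate_sum
    {D : ℕ} (hD : 0 < D) (E : Fin D → ℝ)
    (ρ PiA : Matrix (Fin D) (Fin D) ℂ)
    (hρ : IsState ρ) (hPiA : IsObservable PiA) :
    Filter.Tendsto
      (fun T : ℝ => (1 / (2 * T) : ℝ) • ∫ t in (-T)..T, (evolve E t ρ * PiA).trace)
      Filter.atTop
      (nhds (∑ n : Fin D, ∑ m : Fin D, if E n = E m then ρ n m * PiA m n else 0)) :=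
  infinite_time_average_eq_degenerate_sum_general E ρ PiA

end QET
end

section
/- Assume Π_A satisfies energy-band thermalization in the shell S (of cardinality d ≥ 1) with bandwidth ΔE > 0 and accuracy ε > 0, and let w be a weight function such that |w̃(δE)| ≤ w₀ for every |δE| ≥ ΔE, where w₀ ≥ 0. Let (ψ_k)_{k ∈ Fin d} be any orthonormal basis of the shell subspace, and for each k set λ_k := ∫_ℝ w(t) · ⟨ψ_k(t), Π_A ψ_k(t)⟩ dt − ⟨Π_A⟩_S, where ψ_k(t) := exp(−itH) ψ_k. Then for every λ > 0, the number of indices k ∈ Fin d with |λ_k| ≥ λ is strictly less than (√2 · d / λ) · (ε + w₀ · √(⟨Π_A⟩_S)). -/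
open MeasureTheory Filter
open scoped ComplexOrder

namespace QET

variable {D : ℕ}

/-!
Averaging over `w` turns `⟨ψ(t), Π_A ψ(t)⟩` into `⟨ψ, Λ ψ⟩`, where
`Λ_{nm} = w̃(E m - E n) (Π_A)_{nm}`. For a unit vector `ψ_k` in the shell, `λ_k = ⟨ψ_k, Λ' ψ_k⟩`
with `Λ'` the same dephasing of `Π_A - ⟨Π_A⟩_S`, compressed to the shell. Inside the energy band
`|w̃| ≤ 1`, so energy-band thermalization bounds the squared Hilbert–Schmidt norm of that part of
`Λ'` by `d ε²`; outside it the entries are off-diagonal entries of `Π_A` damped by `w₀`, and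
`Σ_{n,m ∈ S} |(Π_A)_{nm}|² ≤ Tr(Π_A Π_S) = d ⟨Π_A⟩_S` because `Π_A` is a projection. For an
orthonormal family `Σ_k |⟨ψ_k, M ψ_k⟩|² ≤ ‖M‖²_HS` (Cauchy–Schwarz and Bessel), hence
`Σ_k |λ_k|² < 2 d (ε + w₀ √⟨Π_A⟩_S)²`, and Cauchy–Schwarz with Markov's inequality bound the
number of `k` with `|λ_k| ≥ λ`.
-/

open scoped Matrix

section Orthonormal

variable {ι n : Type*} [DecidableEq ι]

lemma orthonormal_toLp_of_dotProduct [Fintype n] {ψ : ι → n → ℂ}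
    (hon : ∀ k l, star (ψ k) ⬝ᵥ ψ l = if k = l then 1 else 0) :
    Orthonormal ℂ fun k => WithLp.toLp 2 (ψ k) := by
  rw [orthonormal_iff_ite]
  intro k l
  rw [EuclideanSpace.inner_toLp_toLp, dotProduct_comm, hon]

lemma sum_sq_norm_dotProduct_le [Fintype ι] [Fintype n] {ψ : ι → n → ℂ}
    (hon : ∀ k l, star (ψ k) ⬝ᵥ ψ l = if k = l then 1 else 0) (u : n → ℂ) :
    ∑ k, ‖u ⬝ᵥ ψ k‖ ^ 2 ≤ ∑ m, ‖u m‖ ^ 2 := by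
  simpa [EuclideanSpace.inner_toLp_toLp, EuclideanSpace.norm_sq_eq, Matrix.star_dotProduct_star,
    dotProduct_comm u] using (orthonormal_toLp_of_dotProduct hon).sum_inner_products_le
      (x := WithLp.toLp 2 (star u)) (s := Finset.univ)

lemma sum_sq_norm_expVal_le [Fintype ι] {D : ℕ} {ψ : ι → Fin D → ℂ}
    (hon : ∀ k l, star (ψ k) ⬝ᵥ ψ l = if k = l then 1 else 0) (M : Matrix (Fin D) (Fin D) ℂ) :
    ∑ k, ‖expVal M (ψ k)‖ ^ 2 ≤ ∑ n, ∑ m, ‖M n m‖ ^ 2 := by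
  have hψ := orthonormal_toLp_of_dotProduct hon
  calc ∑ k, ‖expVal M (ψ k)‖ ^ 2 ≤ ∑ k, ∑ n, ‖(M *ᵥ ψ k) n‖ ^ 2 := by
        gcongr with k
        have := norm_inner_le_norm (𝕜 := ℂ) (WithLp.toLp 2 (ψ k)) (WithLp.toLp 2 (M *ᵥ ψ k))
        rw [hψ.1 k, one_mul, EuclideanSpace.inner_toLp_toLp, dotProduct_comm] at this
        exact (pow_le_pow_left₀ (norm_nonneg _) this 2).trans_eq (EuclideanSpace.norm_sq_eq _)
    _ = ∑ n, ∑ k, ‖M n ⬝ᵥ ψ k‖ ^ 2 := Finset.sum_comm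
    _ ≤ ∑ n, ∑ m, ‖M n m‖ ^ 2 := by
        gcongr with n
        exact sum_sq_norm_dotProduct_le hon (M n)

end Orthonormal

section ExpVal

variable {D : ℕ}

lemma expVal_eq_sum (M : Matrix (Fin D) (Fin D) ℂ) (v : Fin D → ℂ) :
    expVal M v = ∑ n, ∑ m, star (v n) * M n m * v m := by
  simp only [expVal, dotProduct, Matrix.mulVec, Pi.star_apply, Finset.mul_sum, mul_assoc]

lemma expVal_add (M N : Matrix (Fin D) (Fin D) ℂ) (v : Fin D → ℂ) :
    expVal (M + N) v = expVal M v + expVal N v := by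
  simp [expVal, Matrix.add_mulVec, dotProduct_add]

lemma expVal_sub_smul_one (M : Matrix (Fin D) (Fin D) ℂ) (c : ℂ) {v : Fin D → ℂ}
    (hv : star v ⬝ᵥ v = 1) : expVal (M - c • 1) v = expVal M v - c := by
  simp [expVal, Matrix.sub_mulVec, dotProduct_sub, Matrix.smul_mulVec, hv]

end ExpVal

namespace IsWeight

variable {w : ℝ → ℝ}

lemma fourier_zero (hw : IsWeight w) : fourier w 0 = 1 := by
  simp [fourier, integral_complex_ofReal, hw.normalized]

lemma norm_fourier_le_one (hw : IsWeight w) (a : ℝ) : ‖fourier w a‖ ≤ 1 := by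
  calc ‖fourier w a‖ ≤ ∫ t : ℝ, ‖(w t : ℂ) * Complex.exp (-Complex.I * a * t)‖ :=
        norm_integral_le_integral_norm _
    _ = ∫ t : ℝ, w t := by
        congr 1
        funext t
        simp [Complex.norm_exp, abs_of_nonneg (hw.nonneg t)]
    _ = 1 := hw.normalized

end IsWeight

lemma integrable_weight_mul_exp {w : ℝ → ℝ} (hw : Integrable w) (a : ℝ) :
    Integrable fun t : ℝ => (w t : ℂ) * Complex.exp (-Complex.I * a * t) := by
  refine hw.ofReal.mul_bdd (c := 1) ?_ (ae_of_all _ fun t => ?_)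
  · fun_prop
  · rw [Complex.norm_exp]
    simp

section TimeAverage

variable {D : ℕ} {w : ℝ → ℝ} (E : Fin D → ℝ)

lemma expVal_U_mulVec (t : ℝ) (X : Matrix (Fin D) (Fin D) ℂ) (v : Fin D → ℂ) :
    expVal X (U E t *ᵥ v) = ∑ n, ∑ m,
      star (v n) * X n m * v m * Complex.exp (-Complex.I * ((E m - E n : ℝ) : ℂ) * t) := by
  simp only [expVal_eq_sum, U, Matrix.mulVec_diagonal, star_mul', Complex.star_def,
    ← Complex.exp_conj]
  refine Finset.sum_congr rfl fun n _ => Finset.sum_congr rfl fun m _ => ?_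
  have : (starRingEnd ℂ) (-Complex.I * t * E n) + -Complex.I * t * E m =
      -Complex.I * ((E m - E n : ℝ) : ℂ) * t := by
    simp only [map_mul, map_neg, Complex.conj_I, Complex.conj_ofReal]
    push_cast
    ring
  rw [← this, Complex.exp_add]
  ring

/-- `∫ w(t) e^{itH} X e^{-itH} dt`, written in the eigenbasis of `H`. -/
noncomputable def timeAvg (w : ℝ → ℝ) (X : Matrix (Fin D) (Fin D) ℂ) : Matrix (Fin D) (Fin D) ℂ :=
  Matrix.of fun n m => fourier w (E m - E n) * X n m

lemma integral_weight_mul_expVal_U (hw : Integrable w) (X : Matrix (Fin D) (Fin D) ℂ)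
    (v : Fin D → ℂ) :
    ∫ t : ℝ, (w t : ℂ) * expVal X (U E t *ᵥ v) = expVal (timeAvg E w X) v := by
  have hint := fun n m : Fin D => integrable_weight_mul_exp hw (E m - E n)
  have hpoint : (fun t : ℝ => (w t : ℂ) * expVal X (U E t *ᵥ v)) = fun t => ∑ n, ∑ m,
      star (v n) * X n m * v m *
        ((w t : ℂ) * Complex.exp (-Complex.I * ((E m - E n : ℝ) : ℂ) * t)) := by
    funext t
    simp only [expVal_U_mulVec, Finset.mul_sum]
    exact Finset.sum_congr rfl fun n _ => Finset.sum_congr rfl fun m _ => by ring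
  rw [hpoint, integral_finsetSum _ fun n _ => integrable_finsetSum _ fun m _ =>
    (hint n m).const_mul _, expVal_eq_sum]
  refine Finset.sum_congr rfl fun n _ => ?_
  rw [integral_finsetSum _ fun m _ => (hint n m).const_mul _]
  refine Finset.sum_congr rfl fun m _ => ?_
  rw [integral_const_mul, timeAvg, Matrix.of_apply, fourier]
  ring

lemma timeAvg_devEl (hw : IsWeight w) (S : Finset (Fin D)) (P : Matrix (Fin D) (Fin D) ℂ) :
    timeAvg E w (Matrix.of (devEl S P)) = timeAvg E w P - (thermVal S P : ℂ) • 1 := by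
  ext n m
  by_cases h : n = m
  · subst h
    simp [timeAvg, devEl, hw.fourier_zero, mul_sub]
  · simp [timeAvg, devEl, h]

end TimeAverage

section Shell

variable {D : ℕ} (S : Finset (Fin D))

lemma shellProj_mul_mul_shellProj_apply (M : Matrix (Fin D) (Fin D) ℂ) (n m : Fin D) :
    (shellProj S * M * shellProj S) n m = if n ∈ S ∧ m ∈ S then M n m else 0 := by
  by_cases hn : n ∈ S <;> by_cases hm : m ∈ S <;>
    simp [shellProj, Matrix.diagonal_mul, Matrix.mul_diagonal, hn, hm]

lemma conjTranspose_shellProj : (shellProj S)ᴴ = shellProj S := by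
  simp [shellProj, Matrix.diagonal_conjTranspose, apply_ite]

lemma expVal_shellProj_mul_mul_shellProj {v : Fin D → ℂ} (hv : shellProj S *ᵥ v = v)
    (M : Matrix (Fin D) (Fin D) ℂ) :
    expVal (shellProj S * M * shellProj S) v = expVal M v := by
  rw [expVal, expVal, ← Matrix.mulVec_mulVec, ← Matrix.mulVec_mulVec, hv,
    Matrix.dotProduct_mulVec, ← conjTranspose_shellProj, ← Matrix.star_mulVec, hv]

lemma sum_sq_norm_shellProj_mul_mul_shellProj (M : Matrix (Fin D) (Fin D) ℂ) :
    ∑ n, ∑ m, ‖(shellProj S * M * shellProj S) n m‖ ^ 2 = ∑ n ∈ S, ∑ m ∈ S, ‖M n m‖ ^ 2 := by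
  simp [shellProj_mul_mul_shellProj_apply, apply_ite, ite_and, Finset.sum_ite_mem]

lemma trace_mul_shellProj (X : Matrix (Fin D) (Fin D) ℂ) :
    (X * shellProj S).trace = ∑ n ∈ S, X n n := by
  simp [Matrix.trace, shellProj, Matrix.mul_diagonal, Finset.sum_ite_mem]

lemma card_mul_thermVal (P : Matrix (Fin D) (Fin D) ℂ) :
    (S.card : ℝ) * thermVal S P = ∑ n ∈ S, (P n n).re := by
  rcases S.eq_empty_or_nonempty with rfl | hS
  · simp
  · rw [thermVal, trace_mul_shellProj, Complex.re_sum]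
    field_simp

end Shell

namespace IsObservable

variable {D : ℕ} {P : Matrix (Fin D) (Fin D) ℂ}

lemma sum_sq_norm_apply (hP : IsObservable P) (n : Fin D) :
    ∑ m, ‖P n m‖ ^ 2 = (P n n).re := by
  have h : (P * Pᴴ) n n = P n n := by rw [hP.1.eq, hP.2]
  rw [← h, Matrix.mul_apply, Complex.re_sum]
  simp [Matrix.conjTranspose_apply, Complex.mul_conj, Complex.sq_norm]

lemma thermVal_nonneg (hP : IsObservable P) (S : Finset (Fin D)) : 0 ≤ thermVal S P := by
  rw [thermVal, trace_mul_shellProj, Complex.re_sum]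
  refine div_nonneg (Finset.sum_nonneg fun n _ => ?_) (Nat.cast_nonneg _)
  rw [← hP.sum_sq_norm_apply]
  positivity

lemma sum_sq_norm_le_card_mul_thermVal (hP : IsObservable P) (S : Finset (Fin D)) :
    ∑ n ∈ S, ∑ m ∈ S, ‖P n m‖ ^ 2 ≤ S.card * thermVal S P := by
  rw [card_mul_thermVal]
  refine Finset.sum_le_sum fun n _ => ?_
  rw [← hP.sum_sq_norm_apply]
  exact Finset.sum_le_sum_of_subset_of_nonneg (Finset.subset_univ S) fun _ _ _ => by positivity

end IsObservable

section Band

variable {D : ℕ} {w : ℝ → ℝ} (E : Fin D → ℝ) (ΔE : ℝ)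

noncomputable def bandMask (M : Matrix (Fin D) (Fin D) ℂ) : Matrix (Fin D) (Fin D) ℂ :=
  Matrix.of fun n m => if |E n - E m| < ΔE then M n m else 0

noncomputable def offBandMask (M : Matrix (Fin D) (Fin D) ℂ) : Matrix (Fin D) (Fin D) ℂ :=
  Matrix.of fun n m => if ΔE ≤ |E n - E m| then M n m else 0

lemma bandMask_add_offBandMask (M : Matrix (Fin D) (Fin D) ℂ) :
    bandMask E ΔE M + offBandMask E ΔE M = M := by
  ext n m
  by_cases h : |E n - E m| < ΔE
  · simp [bandMask, offBandMask, h, not_le_of_gt h]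
  · simp [bandMask, offBandMask, h, not_lt.mp h]

lemma expVal_eq_bandMask_add_offBandMask {S : Finset (Fin D)} {v : Fin D → ℂ}
    (hv : shellProj S *ᵥ v = v) (M : Matrix (Fin D) (Fin D) ℂ) :
    expVal M v = expVal (shellProj S * bandMask E ΔE M * shellProj S) v +
      expVal (shellProj S * offBandMask E ΔE M * shellProj S) v := by
  rw [← expVal_add, ← Matrix.add_mul, ← Matrix.mul_add, bandMask_add_offBandMask,
    expVal_shellProj_mul_mul_shellProj S hv]

variable (S : Finset (Fin D))

lemma sum_sq_norm_bandMask_timeAvg_le (hw : IsWeight w) (X : Matrix (Fin D) (Fin D) ℂ) :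
    ∑ n, ∑ m, ‖(shellProj S * bandMask E ΔE (timeAvg E w X) * shellProj S) n m‖ ^ 2 ≤
      ∑ n ∈ S, ∑ m ∈ S, if |E n - E m| < ΔE then ‖X n m‖ ^ 2 else 0 := by
  rw [sum_sq_norm_shellProj_mul_mul_shellProj]
  gcongr with n _ m _
  simp only [bandMask, timeAvg, Matrix.of_apply]
  split_ifs
  · rw [norm_mul, mul_pow]
    exact mul_le_of_le_one_left (by positivity)
      (pow_le_one₀ (norm_nonneg _) (hw.norm_fourier_le_one _))
  · simp

lemma sum_sq_norm_offBandMask_timeAvg_devEl_le (hΔE : 0 < ΔE) {w₀ : ℝ}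
    (hband : ∀ δE : ℝ, ΔE ≤ |δE| → ‖fourier w δE‖ ≤ w₀) (P : Matrix (Fin D) (Fin D) ℂ) :
    ∑ n, ∑ m, ‖(shellProj S * offBandMask E ΔE (timeAvg E w (Matrix.of (devEl S P))) *
        shellProj S) n m‖ ^ 2 ≤ w₀ ^ 2 * ∑ n ∈ S, ∑ m ∈ S, ‖P n m‖ ^ 2 := by
  rw [sum_sq_norm_shellProj_mul_mul_shellProj, Finset.mul_sum]
  gcongr with n _
  rw [Finset.mul_sum]
  gcongr with m _
  simp only [offBandMask, timeAvg, Matrix.of_apply]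
  split_ifs with hoff
  · have hnm : n ≠ m := by
      rintro rfl
      simp only [sub_self, abs_zero] at hoff
      linarith
    rw [devEl, if_neg hnm, sub_zero, norm_mul, mul_pow]
    gcongr
    exact hband _ (by rwa [abs_sub_comm])
  · rw [norm_zero, zero_pow two_ne_zero]
    positivity

end Band

lemma EnergyBandTherm.bandVar_lt {D : ℕ} {S : Finset (Fin D)} {E : Fin D → ℝ} {ΔE ε : ℝ}
    {P : Matrix (Fin D) (Fin D) ℂ} (h : EnergyBandTherm S E ΔE ε P) (hS : 0 < S.card) :
    bandVar S E ΔE P < S.card * ε ^ 2 := by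
  rwa [EnergyBandTherm, one_div, inv_mul_lt_iff₀ (by exact_mod_cast hS)] at h

section Counting

variable {ι F : Type*} [Fintype ι] [SeminormedAddCommGroup F]

lemma sum_sq_norm_add_lt {a b : ι → F} {N x y : ℝ} (hN : 0 ≤ N) (hx : 0 ≤ x) (hy : 0 ≤ y)
    (ha : ∑ k, ‖a k‖ ^ 2 < N * x ^ 2) (hb : ∑ k, ‖b k‖ ^ 2 ≤ N * y ^ 2) :
    ∑ k, ‖a k + b k‖ ^ 2 < N * (Real.sqrt 2 * (x + y)) ^ 2 := by
  have hsplit : ∑ k, ‖a k + b k‖ ^ 2 ≤ 2 * (∑ k, ‖a k‖ ^ 2 + ∑ k, ‖b k‖ ^ 2) := by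
    rw [← Finset.sum_add_distrib, Finset.mul_sum]
    gcongr with k
    exact (pow_le_pow_left₀ (norm_nonneg _) (norm_add_le _ _) 2).trans add_sq_le
  rw [mul_pow, Real.sq_sqrt zero_le_two]
  nlinarith [mul_nonneg hN (mul_nonneg hx hy)]

lemma card_filter_le_norm_lt_of_sum_sq_lt (f : ι → F) {lam c : ℝ} (hlam : 0 < lam)
    (h : ∑ k, ‖f k‖ ^ 2 < Fintype.card ι * c ^ 2) (hc : 0 ≤ c) :
    ((Finset.univ.filter fun k => lam ≤ ‖f k‖).card : ℝ) < Fintype.card ι * c / lam := by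
  set large := Finset.univ.filter fun k => lam ≤ ‖f k‖
  have hmarkov : large.card * lam ≤ ∑ k, ‖f k‖ :=
    calc large.card * lam = ∑ _k ∈ large, lam := by rw [Finset.sum_const, nsmul_eq_mul]
      _ ≤ ∑ k ∈ large, ‖f k‖ := Finset.sum_le_sum fun k hk => (Finset.mem_filter.mp hk).2
      _ ≤ ∑ k, ‖f k‖ := Finset.sum_le_sum_of_subset_of_nonneg (Finset.subset_univ large)
            fun _ _ _ => norm_nonneg _
  have hcard : (0 : ℝ) < Fintype.card ι := by
    refine (Nat.cast_nonneg _).lt_of_ne fun h0 => ?_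
    rw [← h0, zero_mul] at h
    exact h.not_ge (by positivity)
  have hsum : ∑ k, ‖f k‖ < Fintype.card ι * c := by
    refine lt_of_pow_lt_pow_left₀ 2 (by positivity) ?_
    calc (∑ k, ‖f k‖) ^ 2 ≤ Fintype.card ι * ∑ k, ‖f k‖ ^ 2 := sq_sum_le_card_mul_sum_sq
      _ < Fintype.card ι * (Fintype.card ι * c ^ 2) := by gcongr
      _ = (Fintype.card ι * c) ^ 2 := by ring
  rw [lt_div_iff₀ hlam]
  linarith

end Counting

theorem energy_band_thermalization_implies_almost_all_basis_states_thermalize_general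
    {D : ℕ} (E : Fin D → ℝ)
    (S : Finset (Fin D)) (hd : 1 ≤ S.card)
    (PiA : Matrix (Fin D) (Fin D) ℂ) (hPiA : IsObservable PiA)
    (ΔE ε : ℝ) (hΔE : 0 < ΔE) (hε : 0 < ε)
    (hEBT : EnergyBandTherm S E ΔE ε PiA)
    (w : ℝ → ℝ) (hw : IsWeight w) (w₀ : ℝ) (hw₀ : 0 ≤ w₀)
    (hband : ∀ δE : ℝ, ΔE ≤ |δE| → ‖fourier w δE‖ ≤ w₀)
    (ψ : Fin S.card → (Fin D → ℂ))
    (hshell : ∀ k, (shellProj S).mulVec (ψ k) = ψ k)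
    (hon : ∀ k l, dotProduct (star (ψ k)) (ψ l) = if k = l then 1 else 0)
    (lam : ℝ) (hlam : 0 < lam) :
    ((Finset.univ.filter fun k : Fin S.card =>
        lam ≤ ‖(∫ t : ℝ, (w t : ℂ) * expVal PiA ((U E t).mulVec (ψ k))) -
          (thermVal S PiA : ℂ)‖).card : ℝ)
      < (Real.sqrt 2 * S.card / lam) * (ε + w₀ * Real.sqrt (thermVal S PiA)) := by
  set th := thermVal S PiA
  set Λ := timeAvg E w (Matrix.of (devEl S PiA))
  set inBand := fun k => expVal (shellProj S * bandMask E ΔE Λ * shellProj S) (ψ k)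
  set offBand := fun k => expVal (shellProj S * offBandMask E ΔE Λ * shellProj S) (ψ k)
  have hdecomp : ∀ k, (∫ t : ℝ, (w t : ℂ) * expVal PiA (U E t *ᵥ ψ k)) - th =
      inBand k + offBand k := fun k => by
    rw [integral_weight_mul_expVal_U E hw.integrable,
      ← expVal_sub_smul_one _ _ (by simpa using hon k k), ← timeAvg_devEl E hw,
      expVal_eq_bandMask_add_offBandMask E ΔE (hshell k)]
  have hinBand : ∑ k, ‖inBand k‖ ^ 2 < S.card * ε ^ 2 :=
    ((sum_sq_norm_expVal_le hon _).trans (sum_sq_norm_bandMask_timeAvg_le E ΔE S hw _)).trans_lt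
      (hEBT.bandVar_lt hd)
  have hoffBand : ∑ k, ‖offBand k‖ ^ 2 ≤ S.card * (w₀ * Real.sqrt th) ^ 2 := by
    refine ((sum_sq_norm_expVal_le hon _).trans
      (sum_sq_norm_offBandMask_timeAvg_devEl_le E ΔE S hΔE hband PiA)).trans ?_
    rw [mul_pow, Real.sq_sqrt (hPiA.thermVal_nonneg S), mul_left_comm]
    gcongr
    exact hPiA.sum_sq_norm_le_card_mul_thermVal S
  have htotal := sum_sq_norm_add_lt (Nat.cast_nonneg _) hε.le (by positivity) hinBand hoffBand
  have hcount := card_filter_le_norm_lt_of_sum_sq_lt (fun k => inBand k + offBand k) hlam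
    (by simpa using htotal) (by positivity)
  simp only [← hdecomp, Fintype.card_fin] at hcount
  calc _ < S.card * (Real.sqrt 2 * (ε + w₀ * Real.sqrt th)) / lam := hcount
    _ = _ := by ring

/-- **Energy-band thermalization implies almost all physical basis states thermalize o.a.**
If `Π_A` satisfies energy-band thermalization in the shell `S` (of cardinality `d ≥ 1`)
with bandwidth `ΔE > 0` and accuracy `ε > 0`, and `w` is a weight function with
`|w̃(δE)| ≤ w₀` whenever `|δE| ≥ ΔE`, then for any orthonormal basis `(ψ_k)_{k ∈ Fin d}` of
the shell subspace and any `λ > 0`, the number of `k` with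
`|∫ w(t) ⟨ψ_k(t), Π_A ψ_k(t)⟩ dt - ⟨Π_A⟩_S| ≥ λ` is `< (√2 d / λ)(ε + w₀ √⟨Π_A⟩_S)`. -/
theorem energy_band_thermalization_implies_almost_all_basis_states_thermalize
    {D : ℕ} (hD : 0 < D) (E : Fin D → ℝ)
    (S : Finset (Fin D)) (hd : 1 ≤ S.card)
    (PiA : Matrix (Fin D) (Fin D) ℂ) (hPiA : IsObservable PiA)
    (ΔE ε : ℝ) (hΔE : 0 < ΔE) (hε : 0 < ε)
    (hEBT : EnergyBandTherm S E ΔE ε PiA)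
    (w : ℝ → ℝ) (hw : IsWeight w) (w₀ : ℝ) (hw₀ : 0 ≤ w₀)
    (hband : ∀ δE : ℝ, ΔE ≤ |δE| → ‖fourier w δE‖ ≤ w₀)
    (ψ : Fin S.card → (Fin D → ℂ))
    (hshell : ∀ k, (shellProj S).mulVec (ψ k) = ψ k)
    (hon : ∀ k l, dotProduct (star (ψ k)) (ψ l) = if k = l then 1 else 0)
    (lam : ℝ) (hlam : 0 < lam) :
    ((Finset.univ.filter fun k : Fin S.card =>
        lam ≤ ‖(∫ t : ℝ, (w t : ℂ) * expVal PiA ((U E t).mulVec (ψ k))) -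
          (thermVal S PiA : ℂ)‖).card : ℝ)
      < (Real.sqrt 2 * S.card / lam) * (ε + w₀ * Real.sqrt (thermVal S PiA)) :=
  energy_band_thermalization_implies_almost_all_basis_states_thermalize_general E S hd PiA hPiA ΔE ε
    hΔE hε hEBT w hw w₀ hw₀ hband ψ hshell hon lam hlam

end QET
end

section
/- Assume Π_A satisfies energy-band thermalization in the shell S (of cardinality d ≥ 1) with bandwidth ΔE > 0 and accuracy ε > 0. Let S' ⊆ S be a subset such that |E q − E r| < ΔE for all q, r ∈ S', and let ρ be a state supported on the span of {e q : q ∈ S'}. Then |Tr(ρ Π_A) − ⟨Π_A⟩_S| < ε · √(d · Tr(ρ²)). -/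
/-!
Because `Tr ρ = 1` and `ρ` vanishes outside `S' × S'`,
`Tr(ρ Π_A) - ⟨Π_A⟩_S = Σ_{n,m ∈ S'} ρ_{nm} (Π_A - ⟨Π_A⟩_S)_{mn}`.
By Cauchy–Schwarz this is at most `‖ρ‖_F = √Tr ρ²` times the `ℓ²`-norm of the deviations
`(Π_A - ⟨Π_A⟩_S)_{mn}` over `S' × S'`. All these pairs lie in the energy band, so that norm is
bounded by the band variance, which energy-band thermalization makes smaller than `ε √d`.
-/

open MeasureTheory Filter
open scoped ComplexOrder

namespace QET

variable {D : ℕ}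

open Finset

theorem _root_.Matrix.IsHermitian.re_trace_mul_self {n : Type*} [Fintype n]
    {A : Matrix n n ℂ} (hA : A.IsHermitian) :
    (A * A).trace.re = ∑ i, ∑ j, ‖A i j‖ ^ 2 := by
  simp only [Matrix.trace, Matrix.diag_apply, Matrix.mul_apply, Complex.re_sum]
  refine sum_congr rfl fun i _ => sum_congr rfl fun j _ => ?_
  rw [← hA.apply j i, Complex.star_def, Complex.mul_conj, Complex.normSq_eq_norm_sq]
  norm_cast

theorem _root_.Matrix.IsHermitian.re_trace_mul_self_pos {n : Type*} [Fintype n]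
    {A : Matrix n n ℂ} (hA : A.IsHermitian) (h0 : A ≠ 0) :
    0 < (A * A).trace.re := by
  obtain ⟨i, j, hij⟩ : ∃ i j, A i j ≠ 0 := by
    by_contra! h
    exact h0 (Matrix.ext h)
  rw [hA.re_trace_mul_self]
  exact sum_pos' (fun _ _ => by positivity)
    ⟨i, mem_univ _, sum_pos' (fun _ _ => by positivity)
      ⟨j, mem_univ _, by positivity⟩⟩

theorem norm_sum_sum_mul_le {ι κ R : Type*} [SeminormedRing R] (s : Finset ι) (t : Finset κ)
    (a b : ι → κ → R) :
    ‖∑ i ∈ s, ∑ j ∈ t, a i j * b i j‖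
      ≤ √(∑ i ∈ s, ∑ j ∈ t, ‖a i j‖ ^ 2) * √(∑ i ∈ s, ∑ j ∈ t, ‖b i j‖ ^ 2) := by
  simp only [← sum_product']
  calc ‖∑ p ∈ s ×ˢ t, a p.1 p.2 * b p.1 p.2‖
      ≤ ∑ p ∈ s ×ˢ t, ‖a p.1 p.2‖ * ‖b p.1 p.2‖ :=
        (norm_sum_le _ _).trans (sum_le_sum fun _ _ => norm_mul_le _ _)
    _ ≤ _ := Real.sum_mul_le_sqrt_mul_sqrt _ _ _

theorem SupportedOn.apply_eq_zero {S : Finset (Fin D)} {ρ : Matrix (Fin D) (Fin D) ℂ}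
    (h : SupportedOn S ρ) {n m : Fin D} (hnm : n ∉ S ∨ m ∉ S) : ρ n m = 0 := by
  have := congrFun (congrFun h n) m
  simp only [shellProj, Matrix.mul_diagonal, Matrix.diagonal_mul] at this
  rcases hnm with hn | hm <;> simp_all

theorem SupportedOn.sum_sum_eq {M : Type*} [AddCommMonoid M] {S : Finset (Fin D)}
    {ρ : Matrix (Fin D) (Fin D) ℂ} (h : SupportedOn S ρ) {g : Fin D → Fin D → M}
    (hg : ∀ n m, ρ n m = 0 → g n m = 0) :
    ∑ n, ∑ m, g n m = ∑ n ∈ S, ∑ m ∈ S, g n m := by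
  simp only [← sum_product']
  refine (sum_subset (subset_univ _) fun p _ hp => hg _ _ ?_).symm
  rw [mem_product, not_and_or] at hp
  exact h.apply_eq_zero hp

theorem trace_mul_sub_eq_sum_devEl (S : Finset (Fin D)) (ρ P : Matrix (Fin D) (Fin D) ℂ) :
    (ρ * P).trace - ρ.trace * thermVal S P = ∑ n, ∑ m, ρ n m * devEl S P m n := by
  simp [devEl, Matrix.trace, Matrix.mul_apply, mul_sub, sum_sub_distrib, sum_mul]

theorem sum_norm_sq_devEl_le_bandVar {S S' : Finset (Fin D)} (hS'S : S' ⊆ S) {E : Fin D → ℝ}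
    {ΔE : ℝ} (hnarrow : ∀ q ∈ S', ∀ r ∈ S', |E q - E r| < ΔE) (P : Matrix (Fin D) (Fin D) ℂ) :
    ∑ n ∈ S', ∑ m ∈ S', ‖devEl S P n m‖ ^ 2 ≤ bandVar S E ΔE P := by
  calc ∑ n ∈ S', ∑ m ∈ S', ‖devEl S P n m‖ ^ 2
      = ∑ n ∈ S', ∑ m ∈ S', if |E n - E m| < ΔE then ‖devEl S P n m‖ ^ 2 else 0 :=
        sum_congr rfl fun n hn => sum_congr rfl fun m hm =>
          (if_pos (hnarrow n hn m hm)).symm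
    _ ≤ ∑ n ∈ S', ∑ m ∈ S, if |E n - E m| < ΔE then ‖devEl S P n m‖ ^ 2 else 0 :=
        sum_le_sum fun _ _ => sum_le_sum_of_subset_of_nonneg hS'S fun _ _ _ => by positivity
    _ ≤ bandVar S E ΔE P :=
        sum_le_sum_of_subset_of_nonneg hS'S fun _ _ _ => sum_nonneg fun _ _ => by positivity

theorem EnergyBandTherm.sqrt_sum_norm_sq_devEl_lt {S S' : Finset (Fin D)} {E : Fin D → ℝ}
    {ΔE ε : ℝ} {P : Matrix (Fin D) (Fin D) ℂ} (h : EnergyBandTherm S E ΔE ε P) (hε : 0 < ε)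
    (hd : 0 < S.card) (hS'S : S' ⊆ S) (hnarrow : ∀ q ∈ S', ∀ r ∈ S', |E q - E r| < ΔE) :
    √(∑ n ∈ S', ∑ m ∈ S', ‖devEl S P n m‖ ^ 2) < ε * √S.card := by
  rw [← Real.sqrt_sq hε.le, ← Real.sqrt_mul (sq_nonneg _)]
  refine Real.sqrt_lt_sqrt (by positivity)
    ((sum_norm_sq_devEl_le_bandVar hS'S hnarrow P).trans_lt ?_)
  rwa [EnergyBandTherm, one_div, inv_mul_lt_iff₀ (by exact_mod_cast hd), mul_comm] at h

theorem instantaneous_thermal_equilibrium_in_small_shell_general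
    {D : ℕ} (E : Fin D → ℝ)
    (S : Finset (Fin D)) (hd : 1 ≤ S.card)
    (PiA : Matrix (Fin D) (Fin D) ℂ)
    (ΔE ε : ℝ) (hε : 0 < ε)
    (hEBT : EnergyBandTherm S E ΔE ε PiA)
    (S' : Finset (Fin D)) (hS'S : S' ⊆ S)
    (hnarrow : ∀ q ∈ S', ∀ r ∈ S', |E q - E r| < ΔE)
    (ρ : Matrix (Fin D) (Fin D) ℂ) (hρ : IsState ρ) (hsupp : SupportedOn S' ρ) :
    ‖(ρ * PiA).trace - (thermVal S PiA : ℂ)‖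
      < ε * Real.sqrt (S.card * (ρ * ρ).trace.re) := by
  obtain ⟨hpos, htr⟩ := hρ
  have htrace : (ρ * PiA).trace - thermVal S PiA
      = ∑ n ∈ S', ∑ m ∈ S', ρ n m * devEl S PiA m n := by
    simpa [htr] using (trace_mul_sub_eq_sum_devEl S ρ PiA).trans
      (hsupp.sum_sum_eq fun n m h => by simp [h])
  have hfrob : (ρ * ρ).trace.re = ∑ n ∈ S', ∑ m ∈ S', ‖ρ n m‖ ^ 2 :=
    hpos.1.re_trace_mul_self.trans (hsupp.sum_sum_eq fun n m h => by simp [h])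
  have hband : √(∑ n ∈ S', ∑ m ∈ S', ‖devEl S PiA m n‖ ^ 2) < ε * √S.card := by
    rw [sum_comm]
    exact hEBT.sqrt_sum_norm_sq_devEl_lt hε hd hS'S hnarrow
  have hρ0 : ρ ≠ 0 := by rintro rfl; simp at htr
  calc ‖(ρ * PiA).trace - thermVal S PiA‖
      = ‖∑ n ∈ S', ∑ m ∈ S', ρ n m * devEl S PiA m n‖ := by rw [htrace]
    _ ≤ √((ρ * ρ).trace.re) * √(∑ n ∈ S', ∑ m ∈ S', ‖devEl S PiA m n‖ ^ 2) :=
      hfrob ▸ norm_sum_sum_mul_le _ _ _ _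
    _ < √((ρ * ρ).trace.re) * (ε * √S.card) :=
      mul_lt_mul_of_pos_left hband (Real.sqrt_pos.mpr (hpos.1.re_trace_mul_self_pos hρ0))
    _ = ε * √(S.card * (ρ * ρ).trace.re) := by rw [Real.sqrt_mul (Nat.cast_nonneg _)]; ring

/-- **Instantaneous thermal equilibrium in small energy shells (state version).**
If `Π_A` satisfies energy-band thermalization in the shell `S` (of cardinality `d ≥ 1`)
with bandwidth `ΔE > 0` and accuracy `ε > 0`, `S' ⊆ S` has all level spacings within the
band (`|E q - E r| < ΔE` for all `q, r ∈ S'`), and `ρ` is a state supported on the span of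
`{e q : q ∈ S'}`, then `|Tr(ρ Π_A) - ⟨Π_A⟩_S| < ε · √(d · Tr ρ²)`. -/
theorem instantaneous_thermal_equilibrium_in_small_shell
    {D : ℕ} (hD : 0 < D) (E : Fin D → ℝ)
    (S : Finset (Fin D)) (hd : 1 ≤ S.card)
    (PiA : Matrix (Fin D) (Fin D) ℂ) (hPiA : IsObservable PiA)
    (ΔE ε : ℝ) (hΔE : 0 < ΔE) (hε : 0 < ε)
    (hEBT : EnergyBandTherm S E ΔE ε PiA)
    (S' : Finset (Fin D)) (hS'S : S' ⊆ S)
    (hnarrow : ∀ q ∈ S', ∀ r ∈ S', |E q - E r| < ΔE)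
    (ρ : Matrix (Fin D) (Fin D) ℂ) (hρ : IsState ρ) (hsupp : SupportedOn S' ρ) :
    ‖(ρ * PiA).trace - (thermVal S PiA : ℂ)‖
      < ε * Real.sqrt (S.card * (ρ * ρ).trace.re) :=
  instantaneous_thermal_equilibrium_in_small_shell_general E S hd PiA ΔE ε hε hEBT S' hS'S hnarrow ρ
    hρ hsupp

end QET
end

section
/- Let Π_A be an observable on ℂ^D with Tr(Π_A) > 0, set ρ_A := Π_A / Tr(Π_A) and ⟨Π_A⟩ := Tr(Π_A)/D. Let w₊ be a completely positive weight, W ∈ (0,1), and ΔE_W > 0 with w̃₊(δE) > W for all δE with |δE| < ΔE_W. Suppose |∫_ℝ w₊(t) · Tr(ρ_A(t) Π_A) dt − ⟨Π_A⟩| < ε_A for some ε_A > 0. Then for every ΔE with 0 < ΔE ≤ ΔE_W one has (1/D) · Σ_{n,m ∈ Fin D with |E n − E m| < ΔE} |⟨e n, (Π_A − ⟨Π_A⟩·I)(e m)⟩|² < (Tr(Π_A)/(W·D)) · ε_A; that is, Π_A satisfies energy-band thermalization in the full space with bandwidth ΔE and accuracy √(Tr(Π_A)·ε_A/(W·D)).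 -/
open MeasureTheory Filter
open scoped ComplexOrder

namespace QET

variable {D : ℕ}

theorem integrable_ofReal_mul_exp {w : ℝ → ℝ} (hw : Integrable w) (x : ℝ) :
    Integrable fun t : ℝ => (w t : ℂ) * Complex.exp (-Complex.I * x * t) :=
  hw.ofReal.mul_bdd (c := 1) (by fun_prop) (.of_forall fun t => by simp [Complex.norm_exp])

theorem integral_mul_trace_evolve_mul {w : ℝ → ℝ} (hw : Integrable w) (E : Fin D → ℝ)
    (X Y : Matrix (Fin D) (Fin D) ℂ) :
    ∫ t : ℝ, (w t : ℂ) * (evolve E t X * Y).trace =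
      ∑ n, ∑ m, fourier w (E n - E m) * (X n m * Y m n) := by
  have hint (n m : Fin D) : Integrable fun t : ℝ =>
      (w t : ℂ) * (Complex.exp (-Complex.I * (E n - E m : ℝ) * t) * (X n m * Y m n)) :=
    ((integrable_ofReal_mul_exp hw _).mul_const _).congr (.of_forall fun t => mul_assoc _ _ _)
  simp_rw [trace_evolve_mul, Finset.mul_sum]
  rw [integral_finsetSum _ fun n _ => integrable_finsetSum _ fun m _ => hint n m]
  refine Finset.sum_congr rfl fun n _ => ?_
  rw [integral_finsetSum _ fun m _ => hint n m]
  refine Finset.sum_congr rfl fun m _ => ?_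
  simp_rw [fourier, ← integral_mul_const, mul_assoc]

theorem IsWeight.fourier_zero_s9 {w : ℝ → ℝ} (hw : IsWeight w) : fourier w 0 = 1 := by
  simp [fourier, integral_complex_ofReal, hw.normalized]

theorem IsCPWeight.ofReal_re_fourier {w : ℝ → ℝ} (hw : IsCPWeight w) (x : ℝ) :
    ((fourier w x).re : ℂ) = fourier w x :=
  Complex.ext rfl (by simp [hw.fourier_im])

theorem _root_.Matrix.IsHermitian.apply_mul_apply_swap {ι : Type*} {P : Matrix ι ι ℂ}
    (hP : P.IsHermitian) (n m : ι) : P n m * P m n = ((‖P n m‖ ^ 2 : ℝ) : ℂ) := by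
  rw [← hP.apply m n, Complex.star_def, Complex.mul_conj']
  push_cast
  rfl

theorem integral_mul_trace_evolve_smul_mul_self {w : ℝ → ℝ} (hw : Integrable w)
    (E : Fin D → ℝ) {P : Matrix (Fin D) (Fin D) ℂ} (hP : P.IsHermitian) (a : ℂ) :
    ∫ t : ℝ, (w t : ℂ) * (evolve E t (a • P) * P).trace =
      a * ∑ n, ∑ m, fourier w (E n - E m) * ((‖P n m‖ ^ 2 : ℝ) : ℂ) := by
  rw [integral_mul_trace_evolve_mul hw, Finset.mul_sum]
  refine Finset.sum_congr rfl fun n _ => ?_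
  rw [Finset.mul_sum]
  refine Finset.sum_congr rfl fun m _ => ?_
  rw [Matrix.smul_apply, smul_eq_mul, mul_assoc, hP.apply_mul_apply_swap]
  ring

theorem sum_mul_norm_sub_diagonal_sq {ι : Type*} [Fintype ι] [DecidableEq ι]
    (G : ι → ι → ℝ) (hG : ∀ n, G n n = 1) (P : Matrix ι ι ℂ) (r : ℝ) :
    ∑ n, ∑ m, G n m * ‖P n m - if n = m then (r : ℂ) else 0‖ ^ 2 =
      ∑ n, ∑ m, G n m * ‖P n m‖ ^ 2 + Fintype.card ι * r ^ 2 - 2 * r * P.trace.re := by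
  have hterm (n m : ι) : G n m * ‖P n m - if n = m then (r : ℂ) else 0‖ ^ 2 =
      G n m * ‖P n m‖ ^ 2 + if n = m then r ^ 2 - 2 * r * (P n n).re else 0 := by
    split_ifs with h
    · subst h
      simp only [hG, Complex.sq_norm, Complex.normSq_sub, Complex.normSq_ofReal, Complex.conj_ofReal,
        Complex.mul_re, Complex.ofReal_re, Complex.ofReal_im]
      ring
    · simp
  simp_rw [hterm, Finset.sum_add_distrib, Finset.sum_ite_eq, Finset.mem_univ, if_true,
    Finset.sum_sub_distrib, Finset.sum_const, ← Finset.mul_sum, Matrix.trace, Complex.re_sum]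
  simp only [Finset.card_univ, nsmul_eq_mul, Matrix.diag_apply]
  ring

theorem mul_sum_band_le_sum_mul {ι : Type*} [Fintype ι] (E : ι → ℝ) {ΔE W : ℝ}
    {G f : ι → ι → ℝ} (hG : ∀ n m, 0 ≤ G n m) (hGW : ∀ n m, |E n - E m| < ΔE → W ≤ G n m)
    (hf : ∀ n m, 0 ≤ f n m) :
    W * ∑ n, ∑ m, (if |E n - E m| < ΔE then f n m else 0) ≤ ∑ n, ∑ m, G n m * f n m := by
  simp_rw [Finset.mul_sum]
  refine Finset.sum_le_sum fun n _ => Finset.sum_le_sum fun m _ => ?_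
  split_ifs with h
  · exact mul_le_mul_of_nonneg_right (hGW n m h) (hf n m)
  · simpa using mul_nonneg (hG n m) (hf n m)

theorem ofReal_sum_fourier_mul_norm_dev_sq {w : ℝ → ℝ} (hw : IsCPWeight w) (E : Fin D → ℝ)
    {P : Matrix (Fin D) (Fin D) ℂ} (hP : P.IsHermitian) (hc : P.trace.re ≠ 0) :
    ((∑ n, ∑ m, (fourier w (E n - E m)).re *
        ‖P n m - if n = m then ((P.trace.re / D : ℝ) : ℂ) else 0‖ ^ 2 : ℝ) : ℂ) =
      P.trace.re * ((∫ t : ℝ, (w t : ℂ) * (evolve E t ((P.trace.re : ℂ)⁻¹ • P) * P).trace) -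
        ((P.trace.re / D : ℝ) : ℂ)) := by
  set c := P.trace.re
  have hdiag (n : Fin D) : (fourier w (E n - E n)).re = 1 := by
    simp [hw.fourier_zero_s9]
  -- `c / 0 = 0` makes this true for `D = 0` as well
  have hcard : (D : ℂ) * (c / D) ^ 2 = c * (c / D) := by
    rcases eq_or_ne (D : ℂ) 0 with hD | hD
    · simp [hD]
    · field_simp
  rw [sum_mul_norm_sub_diagonal_sq _ hdiag, Fintype.card_fin,
    integral_mul_trace_evolve_smul_mul_self hw.integrable E hP, mul_sub, ← mul_assoc,
    mul_inv_cancel₀ (Complex.ofReal_ne_zero.mpr hc), one_mul]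
  push_cast
  simp only [hw.ofReal_re_fourier]
  linear_combination hcard

theorem autocorrelator_thermalization_implies_global_energy_band_general
    {D : ℕ} (hD : 0 < D) (E : Fin D → ℝ)
    (PiA : Matrix (Fin D) (Fin D) ℂ) (hPiA : IsObservable PiA)
    (htr : 0 < PiA.trace.re)
    (w : ℝ → ℝ) (hw : IsCPWeight w)
    (W ΔEW : ℝ) (hW0 : 0 < W)
    (hWband : ∀ δE : ℝ, |δE| < ΔEW → W < (fourier w δE).re)
    (εA : ℝ)
    (hauto : ‖
        ((∫ t : ℝ, (w t : ℂ) *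
            (evolve E t ((PiA.trace.re : ℂ)⁻¹ • PiA) * PiA).trace) -
          ((PiA.trace.re / D : ℝ) : ℂ))‖ < εA) :
    ∀ ΔE : ℝ, 0 < ΔE → ΔE ≤ ΔEW →
      (1 / (D : ℝ)) * (∑ n : Fin D, ∑ m : Fin D,
          if |E n - E m| < ΔE then
            ‖(PiA n m - if n = m then ((PiA.trace.re / D : ℝ) : ℂ) else 0)‖ ^ 2
          else 0)
        < (PiA.trace.re / (W * D)) * εA := by
  intro ΔE _ hΔE
  set c := PiA.trace.re
  set S := ∑ n, ∑ m, (fourier w (E n - E m)).re *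
    ‖PiA n m - if n = m then ((c / D : ℝ) : ℂ) else 0‖ ^ 2
  have hS : S < c * εA := calc
    S ≤ ‖(S : ℂ)‖ := by rw [Complex.norm_real]; exact le_abs_self S
    _ = c * ‖(∫ t : ℝ, (w t : ℂ) * (evolve E t ((c : ℂ)⁻¹ • PiA) * PiA).trace) -
          ((c / D : ℝ) : ℂ)‖ := by
      rw [ofReal_sum_fourier_mul_norm_dev_sq hw E hPiA.1 htr.ne', norm_mul, Complex.norm_real,
        Real.norm_of_nonneg htr.le]
    _ < c * εA := mul_lt_mul_of_pos_left hauto htr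
  have hband := mul_sum_band_le_sum_mul E (fun n m => hw.fourier_nonneg (E n - E m))
    (fun n m h => (hWband _ (h.trans_le hΔE)).le)
    (fun n m => sq_nonneg ‖PiA n m - if n = m then ((c / D : ℝ) : ℂ) else 0‖)
  have hD' : (0 : ℝ) < D := by exact_mod_cast hD
  rw [one_div_mul_eq_div, div_mul_eq_mul_div, div_lt_div_iff₀ hD' (mul_pos hW0 hD')]
  nlinarith

/-- **Autocorrelator thermalization o.a. implies global energy-band thermalization.**
Let `Π_A` be an observable with `Tr Π_A > 0`, `ρ_A := Π_A / Tr Π_A`, `⟨Π_A⟩ := Tr Π_A / D`.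
Let `w₊` be a completely positive weight with `w̃₊(δE) > W` for all `|δE| < ΔE_W`
(`W ∈ (0,1)`, `ΔE_W > 0`), and suppose
`|∫ w₊(t) Tr(ρ_A(t) Π_A) dt - ⟨Π_A⟩| < ε_A`.  Then for every `0 < ΔE ≤ ΔE_W`,
`(1/D) Σ_{|E n - E m| < ΔE} |⟨e n, (Π_A - ⟨Π_A⟩ I) e m⟩|² < (Tr Π_A /(W D)) ε_A`. -/
theorem autocorrelator_thermalization_implies_global_energy_band
    {D : ℕ} (hD : 0 < D) (E : Fin D → ℝ)
    (PiA : Matrix (Fin D) (Fin D) ℂ) (hPiA : IsObservable PiA)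
    (htr : 0 < PiA.trace.re)
    (w : ℝ → ℝ) (hw : IsCPWeight w)
    (W ΔEW : ℝ) (hW0 : 0 < W) (hW1 : W < 1) (hΔEW : 0 < ΔEW)
    (hWband : ∀ δE : ℝ, |δE| < ΔEW → W < (fourier w δE).re)
    (εA : ℝ) (hεA : 0 < εA)
    (hauto : ‖
        ((∫ t : ℝ, (w t : ℂ) *
            (evolve E t ((PiA.trace.re : ℂ)⁻¹ • PiA) * PiA).trace) -
          ((PiA.trace.re / D : ℝ) : ℂ))‖ < εA) :
    ∀ ΔE : ℝ, 0 < ΔE → ΔE ≤ ΔEW →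
      (1 / (D : ℝ)) * (∑ n : Fin D, ∑ m : Fin D,
          if |E n - E m| < ΔE then
            ‖(PiA n m - if n = m then ((PiA.trace.re / D : ℝ) : ℂ) else 0)‖ ^ 2
          else 0)
        < (PiA.trace.re / (W * D)) * εA :=
  autocorrelator_thermalization_implies_global_energy_band_general hD E PiA hPiA htr w hw W ΔEW hW0
    hWband εA hauto

end QET
end
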